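/- arXiv:1612.06103 — 2 statements merged into one kernel-verified Lean document; each statement's English description precedes it below -/
import Mathlib

section
/- Let λ be an orthogonal partition of 2n+1. Then (λ_1 is odd and λ_{2j} ≡ λ_{2j+1} (mod 2) for every j ≥ 1) (i.e. λ is special) if and only if the transpose ^tλ is an orthogonal partition of 2n+1. -/
open Classical

namespace Wald

/-- `S f k = λ_1 + … + λ_k` (partitions are indexed from 1; index 0 is unused). -/
def S (f : ℕ → ℕ) (k : ℕ) : ℕ := ∑ j ∈ Finset.Icc 1 k, f j

/-- `f` represents a partition of `N`: nonincreasing on indices `≥ 1`,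
finitely many nonzero terms, with total sum `N`. -/
structure IsPartition (f : ℕ → ℕ) (N : ℕ) : Prop where
  mono : ∀ ⦃j k : ℕ⦄, 1 ≤ j → j ≤ k → f k ≤ f j
  fin : ∃ m, ∀ j, m < j → f j = 0
  total : ∀ m, (∀ j, m < j → f j = 0) → S f m = N

/-- multiplicity of `i` as a term of the partition -/
noncomputable def mult (f : ℕ → ℕ) (i : ℕ) : ℕ := Set.ncard {j : ℕ | 1 ≤ j ∧ f j = i}

/-- dominance order: `Dom f g ↔ f ≤ g` -/
def Dom (f g : ℕ → ℕ) : Prop := ∀ k, S f k ≤ S g k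

/-- transposed partition: `(transpose f) j = #{i ≥ 1 : f i ≥ j}` for `j ≥ 1` -/
noncomputable def transpose (f : ℕ → ℕ) : ℕ → ℕ :=
  fun j => Set.ncard {i : ℕ | 1 ≤ i ∧ 1 ≤ j ∧ j ≤ f i}

/-- union of two partitions (all terms listed together in nonincreasing order);
it is characterized by `transpose (unionP f g) = transpose f + transpose g`. -/
noncomputable def unionP (f g : ℕ → ℕ) : ℕ → ℕ :=
  transpose (fun j => transpose f j + transpose g j)

/-- the partition `(1)` -/
def one1 : ℕ → ℕ := fun j => if j = 1 then 1 else 0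

/-- symplectic partition: every odd `i ≥ 1` has even multiplicity -/
def Symp (f : ℕ → ℕ) : Prop := ∀ i, Odd i → Even (mult f i)

/-- orthogonal partition: every even `i ≥ 2` has even multiplicity -/
def Orth (f : ℕ → ℕ) : Prop := ∀ i, Even i → 1 ≤ i → Even (mult f i)

/-- `λ_{2j-1} ≡ λ_{2j} (mod 2)` for all `j ≥ 1` (speciality for symplectic
partitions of `2n` and orthogonal partitions of `2n`). -/
def SpecialPairs (f : ℕ → ℕ) : Prop := ∀ j, 1 ≤ j → f (2*j - 1) % 2 = f (2*j) % 2

/-- speciality for orthogonal partitions of `2n+1`: `λ_1` odd and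
`λ_{2j} ≡ λ_{2j+1} (mod 2)` for all `j ≥ 1`. -/
def SpecialOrthOdd (f : ℕ → ℕ) : Prop :=
  Odd (f 1) ∧ ∀ j, 1 ≤ j → f (2*j) % 2 = f (2*j + 1) % 2

/-- `Jord_bp` for symplectic partitions: even `i ≥ 2` with positive multiplicity -/
def JordbpS (f : ℕ → ℕ) : Set ℕ := {i | Even i ∧ 2 ≤ i ∧ 1 ≤ mult f i}

/-- `Jord_bp` for orthogonal partitions: odd `i ≥ 1` with positive multiplicity -/
def JordbpO (f : ℕ → ℕ) : Set ℕ := {i | Odd i ∧ 1 ≤ mult f i}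

/-- the set `{i_1 > … > i_m}` of terms with odd multiplicity -/
def OddSet (f : ℕ → ℕ) : Set ℕ := {i | Odd (mult f i)}

/-- for special symplectic partitions: `{i_1 > … > i_{m'}}`, with `0` added if `m` is odd -/
def Dsymp (f : ℕ → ℕ) : Set ℕ :=
  {i | Odd (mult f i) ∨ (i = 0 ∧ Odd (OddSet f).ncard)}

/-- `a = i_{2h-1}` and `b = i_{2h}` for some `h`: consecutive elements of `Dsymp f`
with an even number of elements of `Dsymp f` above `a`. -/
def PairedS (f : ℕ → ℕ) (a b : ℕ) : Prop :=
  b < a ∧ a ∈ Dsymp f ∧ b ∈ Dsymp f ∧ Even ((Dsymp f ∩ Set.Ioi a).ncard) ∧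
    Dsymp f ∩ Set.Ioo b a = ∅

/-- intervals of a special symplectic partition of `2n` -/
def IsIntervalS (f : ℕ → ℕ) (Δ : Set ℕ) : Prop :=
  (∃ a b, PairedS f a b ∧ Δ = {i | (i = 0 ∨ 1 ≤ mult f i) ∧ b ≤ i ∧ i ≤ a}) ∨
  (∃ i, Even i ∧ (i = 0 ∨ (2 ≤ i ∧ 1 ≤ mult f i)) ∧
    (¬ ∃ a b, PairedS f a b ∧ b ≤ i ∧ i ≤ a) ∧ Δ = {i})

/-- `a = i_{2h-1}` and `b = i_{2h}` for some `h` (orthogonal partitions of `2n`) -/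
def PairedOE (f : ℕ → ℕ) (a b : ℕ) : Prop :=
  b < a ∧ a ∈ OddSet f ∧ b ∈ OddSet f ∧ Even ((OddSet f ∩ Set.Ioi a).ncard) ∧
    OddSet f ∩ Set.Ioo b a = ∅

/-- intervals of a special orthogonal partition of `2n` -/
def IsIntervalOE (f : ℕ → ℕ) (Δ : Set ℕ) : Prop :=
  (∃ a b, PairedOE f a b ∧ Δ = {i | 1 ≤ mult f i ∧ b ≤ i ∧ i ≤ a}) ∨
  (∃ i, Odd i ∧ 1 ≤ mult f i ∧ (¬ ∃ a b, PairedOE f a b ∧ b ≤ i ∧ i ≤ a) ∧ Δ = {i})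

/-- `a = i_{2h}` and `b = i_{2h+1}` for some `h ≥ 1` (orthogonal partitions of `2n+1`) -/
def PairedOO (f : ℕ → ℕ) (a b : ℕ) : Prop :=
  b < a ∧ a ∈ OddSet f ∧ b ∈ OddSet f ∧ Odd ((OddSet f ∩ Set.Ioi a).ncard) ∧
    OddSet f ∩ Set.Ioo b a = ∅

/-- intervals of a special orthogonal partition of `2n+1` (convention `i_0 = ∞`) -/
def IsIntervalOO (f : ℕ → ℕ) (Δ : Set ℕ) : Prop :=
  (∃ b, b ∈ OddSet f ∧ OddSet f ∩ Set.Ioi b = ∅ ∧ Δ = {i | 1 ≤ mult f i ∧ b ≤ i}) ∨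
  (∃ a b, PairedOO f a b ∧ Δ = {i | 1 ≤ mult f i ∧ b ≤ i ∧ i ≤ a}) ∨
  (∃ i, Odd i ∧ 1 ≤ mult f i ∧
    (¬ ((∃ b, b ∈ OddSet f ∧ OddSet f ∩ Set.Ioi b = ∅ ∧ b ≤ i) ∨
        (∃ a b, PairedOO f a b ∧ b ≤ i ∧ i ≤ a))) ∧ Δ = {i})

/-- `J(Δ) = {j ≥ 1 : λ_j ∈ Δ}` -/
def Jset (f : ℕ → ℕ) (Δ : Set ℕ) : Set ℕ := {j | 1 ≤ j ∧ f j ∈ Δ}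

/-- `ζ(λ)` for a special symplectic partition (`j_max(Δ_min) = ∞`, so the smallest
interval contributes no `-1`: its `J`-set has no greatest element). -/
noncomputable def zetaS (f : ℕ → ℕ) : ℕ → ℤ := fun j =>
  if ∃ Δ, IsIntervalS f Δ ∧ IsLeast (Jset f Δ) j then 1
  else if ∃ Δ, IsIntervalS f Δ ∧ IsGreatest (Jset f Δ) j then -1
  else 0

/-- `ζ(λ)` for a special orthogonal partition of `2n` -/
noncomputable def zetaOE (f : ℕ → ℕ) : ℕ → ℤ := fun j =>
  if ∃ Δ, IsIntervalOE f Δ ∧ IsLeast (Jset f Δ) j then 1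
  else if ∃ Δ, IsIntervalOE f Δ ∧ IsGreatest (Jset f Δ) j then -1
  else 0

/-- `J^+` for `λ1` special symplectic and `λ2` special orthogonal (of `2n2`) -/
def JplusSet (f1 f2 : ℕ → ℕ) : Set ℕ :=
  {j | 1 ≤ j ∧ Even (f1 j) ∧ Odd (f2 j) ∧
    ((∃ Δ, IsIntervalS f1 Δ ∧ IsLeast (Jset f1 Δ) j) ∨
     (∃ Δ, IsIntervalOE f2 Δ ∧ IsLeast (Jset f2 Δ) j))}

/-- `J^-` -/
def JminusSet (f1 f2 : ℕ → ℕ) : Set ℕ :=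
  {j | 1 ≤ j ∧ Even (f1 j) ∧ Odd (f2 j) ∧
    ((∃ Δ, IsIntervalS f1 Δ ∧ IsGreatest (Jset f1 Δ) j) ∨
     (∃ Δ, IsIntervalOE f2 Δ ∧ IsGreatest (Jset f2 Δ) j))}

/-- the sequence `ξ` -/
noncomputable def xi (f1 f2 : ℕ → ℕ) : ℕ → ℤ := fun j =>
  if j ∈ JplusSet f1 f2 then 1 else if j ∈ JminusSet f1 f2 then -1 else 0

/-- partial sums of an integer-valued sequence indexed from 1 -/
def Sz (f : ℕ → ℤ) (k : ℕ) : ℤ := ∑ j ∈ Finset.Icc 1 k, f j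

/-- `g` is the greatest orthogonal partition of `N` which is dominated by the
sequence `t` (used to define the Spaltenstein-type duality `d`). -/
def IsDualOf (g : ℕ → ℕ) (N : ℕ) (t : ℕ → ℕ) : Prop :=
  (IsPartition g N ∧ Orth g ∧ Dom g t) ∧
  ∀ ν, IsPartition ν N → Orth ν → Dom ν t → Dom ν g

/-- `g = d(f)` for `f` a symplectic partition of `2m`: the greatest orthogonal
partition of `2m+1` dominated by `^t(f ∪ (1))`. -/
def IsSympDual (g : ℕ → ℕ) (m : ℕ) (f : ℕ → ℕ) : Prop :=
  IsDualOf g (2*m+1) (transpose (unionP f one1))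

/-- `g = d(f)` for `f` an orthogonal partition of `2m`: the greatest orthogonal
partition of `2m` dominated by `^tf`. -/
def IsOrthDual (g : ℕ → ℕ) (m : ℕ) (f : ℕ → ℕ) : Prop :=
  IsDualOf g (2*m) (transpose f)

/-!
The transpose is governed by the Galois connection `i ≤ ᵗλ_j ↔ j ≤ λ_i` (for `i, j ≥ 1`),
so the multiplicity of `i` in `ᵗλ` is `λ_i - λ_{i+1}`. Hence `ᵗλ` is orthogonal exactly when
`λ_{2j} ≡ λ_{2j+1} (mod 2)` for all `j ≥ 1`. These congruences make every partial sum
`λ_1 + ⋯ + λ_{2k+1}` congruent to `λ_1`, and the total `2n+1` then forces `λ_1` to be odd.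
-/

section Transpose

variable {f : ℕ → ℕ} {N : ℕ}

lemma IsPartition.le_transpose_iff (hf : IsPartition f N) {i j : ℕ} (hi : 1 ≤ i) (hj : 1 ≤ j) :
    i ≤ transpose f j ↔ j ≤ f i := by
  obtain ⟨K, hK⟩ := hf.fin
  have hfin : {k : ℕ | 1 ≤ k ∧ 1 ≤ j ∧ j ≤ f k}.Finite := by
    refine (Set.finite_Icc 1 K).subset fun k ⟨hk, _, hjk⟩ => ⟨hk, ?_⟩
    by_contra hKk
    have := hK k (by omega)
    omega
  constructor
  · intro hle
    by_contra hlt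
    have hsub : {k : ℕ | 1 ≤ k ∧ 1 ≤ j ∧ j ≤ f k} ⊆ ↑(Finset.Ico 1 i) := by
      rintro k ⟨hk, _, hjk⟩
      have hki : k < i := by
        by_contra hik
        have := hf.mono hi (not_lt.1 hik)
        omega
      simp only [Finset.coe_Ico, Set.mem_Ico]
      omega
    have := Set.ncard_le_ncard hsub (Finset.finite_toSet _)
    rw [Set.ncard_coe_finset, Nat.card_Ico] at this
    exact absurd (hle.trans this) (by omega)
  · intro hji
    have hsub : (↑(Finset.Icc 1 i) : Set ℕ) ⊆ {k : ℕ | 1 ≤ k ∧ 1 ≤ j ∧ j ≤ f k} := by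
      intro k hk
      simp only [Finset.coe_Icc, Set.mem_Icc] at hk
      exact ⟨hk.1, hj, hji.trans (hf.mono hk.1 hk.2)⟩
    have := Set.ncard_le_ncard hsub hfin
    rwa [Set.ncard_coe_finset, Nat.card_Icc, Nat.add_sub_cancel] at this

lemma IsPartition.mult_transpose (hf : IsPartition f N) {i : ℕ} (hi : 1 ≤ i) :
    mult (transpose f) i = f i - f (i + 1) := by
  have hset : {j : ℕ | 1 ≤ j ∧ transpose f j = i} = ↑(Finset.Ioc (f (i + 1)) (f i)) := by
    ext j
    simp only [Set.mem_ofPred_eq, Finset.coe_Ioc, Set.mem_Ioc]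
    by_cases hj : 1 ≤ j
    · have h₁ := hf.le_transpose_iff hi hj
      have h₂ := hf.le_transpose_iff (i := i + 1) (by omega) hj
      omega
    · simp only [hj, false_and, false_iff]
      omega
  rw [mult, hset, Set.ncard_coe_finset, Nat.card_Ioc]

lemma transpose_eq_card {K : ℕ} (hK : ∀ k, K < k → f k = 0) {j : ℕ} (hj : 1 ≤ j) :
    transpose f j = ((Finset.Icc 1 K).filter (fun k => j ≤ f k)).card := by
  rw [transpose, ← Set.ncard_coe_finset]
  congr 1
  ext k
  simp only [Set.mem_ofPred_eq, Finset.coe_filter, Finset.mem_Icc]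
  have := hK k
  omega

lemma IsPartition.S_transpose (hf : IsPartition f N) {K m : ℕ}
    (hK : ∀ k, K < k → f k = 0) (hm : f 1 ≤ m) : S (transpose f) m = S f K := by
  calc S (transpose f) m
      = ∑ j ∈ Finset.Icc 1 m, ∑ k ∈ Finset.Icc 1 K, if j ≤ f k then 1 else 0 := by
        refine Finset.sum_congr rfl fun j hj => ?_
        rw [transpose_eq_card hK (Finset.mem_Icc.1 hj).1, Finset.card_filter]
    _ = ∑ k ∈ Finset.Icc 1 K, ∑ j ∈ Finset.Icc 1 m, if j ≤ f k then 1 else 0 :=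
        Finset.sum_comm
    _ = S f K := by
        refine Finset.sum_congr rfl fun k hk => ?_
        have hfk : f k ≤ m := (hf.mono le_rfl (Finset.mem_Icc.1 hk).1).trans hm
        have hfilter : (Finset.Icc 1 m).filter (· ≤ f k) = Finset.Icc 1 (f k) := by
          ext j
          simp only [Finset.mem_filter, Finset.mem_Icc]
          omega
        rw [← Finset.card_filter, hfilter, Nat.card_Icc, Nat.add_sub_cancel]

lemma isPartition_transpose (hf : IsPartition f N) : IsPartition (transpose f) N where
  mono j k hj hjk := by
    rcases Nat.eq_zero_or_pos (transpose f k) with h | h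
    · omega
    · have hk := (hf.le_transpose_iff h (hj.trans hjk)).1 le_rfl
      exact (hf.le_transpose_iff h hj).2 (hjk.trans hk)
  fin := ⟨f 1, fun j hj => by
    by_contra h
    have := (hf.le_transpose_iff (i := 1) (j := j) le_rfl (by omega)).1 (by omega)
    omega⟩
  total m hm := by
    obtain ⟨K, hK⟩ := hf.fin
    have hf1 : f 1 ≤ m := by
      by_contra h
      have := (hf.le_transpose_iff (i := 1) le_rfl (by omega)).2 le_rfl
      have := hm (f 1) (by omega)
      omega
    rw [hf.S_transpose hK hf1, hf.total K hK]

lemma IsPartition.orth_transpose_iff (hf : IsPartition f N) :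
    Orth (transpose f) ↔ ∀ j, 1 ≤ j → f (2 * j) % 2 = f (2 * j + 1) % 2 := by
  have key : ∀ i, 1 ≤ i → (Even (mult (transpose f) i) ↔ f i % 2 = f (i + 1) % 2) := by
    intro i hi
    rw [hf.mult_transpose hi, Nat.even_sub (hf.mono hi (by omega : i ≤ i + 1)), Nat.even_iff,
      Nat.even_iff]
    omega
  constructor
  · intro horth j hj
    exact (key (2 * j) (by omega)).1 (horth (2 * j) (even_two_mul j) (by omega))
  · rintro hpairs i ⟨j, rfl⟩ hi
    rw [key _ hi, ← two_mul]
    exact hpairs j (by omega)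

end Transpose

lemma S_two_mul_add_one_mod_two {f : ℕ → ℕ}
    (hpairs : ∀ j, 1 ≤ j → f (2 * j) % 2 = f (2 * j + 1) % 2) (k : ℕ) :
    S f (2 * k + 1) % 2 = f 1 % 2 := by
  induction k with
  | zero => simp [S]
  | succ k ih =>
    have hS : S f (2 * k + 3) = S f (2 * k + 1) + f (2 * k + 2) + f (2 * k + 3) := by
      rw [S, S, Finset.sum_Icc_succ_top (by omega), Finset.sum_Icc_succ_top (by omega)]
    have hpair : f (2 * k + 2) % 2 = f (2 * k + 3) % 2 := hpairs (k + 1) (by omega)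
    rw [show 2 * (k + 1) + 1 = 2 * k + 3 by ring]
    omega

lemma IsPartition.odd_apply_one {f : ℕ → ℕ} {N : ℕ} (hf : IsPartition f N) (hN : Odd N)
    (hpairs : ∀ j, 1 ≤ j → f (2 * j) % 2 = f (2 * j + 1) % 2) : Odd (f 1) := by
  obtain ⟨K, hK⟩ := hf.fin
  have htotal := hf.total (2 * K + 1) fun j hj => hK j (by omega)
  have := S_two_mul_add_one_mod_two hpairs K
  rw [Nat.odd_iff] at hN ⊢
  omega

theorem stmt9_general (n : ℕ) (f : ℕ → ℕ) (hpart : IsPartition f (2*n+1)) :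
    SpecialOrthOdd f ↔ (IsPartition (transpose f) (2*n+1) ∧ Orth (transpose f)) := by
  constructor
  · rintro ⟨-, hpairs⟩
    exact ⟨isPartition_transpose hpart, hpart.orth_transpose_iff.2 hpairs⟩
  · rintro ⟨-, horth⟩
    have hpairs := hpart.orth_transpose_iff.1 horth
    exact ⟨hpart.odd_apply_one (odd_two_mul_add_one n) hpairs, hpairs⟩

/-- An orthogonal partition of `2n+1` is special iff its transpose is orthogonal. -/
theorem stmt9 (n : ℕ) (f : ℕ → ℕ) (hpart : IsPartition f (2*n+1)) (horth : Orth f) :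
    SpecialOrthOdd f ↔ (IsPartition (transpose f) (2*n+1) ∧ Orth (transpose f)) :=
  stmt9_general n f hpart

end Wald
end

section
/- For every integer n ≥ 1 and every partition Λ of 2n, the set of symplectic partitions of 2n that are ≤ Λ in the dominance order is nonempty and possesses a greatest element. -/
open Classical

namespace Wald

/-! Transposition reverses the dominance order, and `f` is symplectic iff every partial sum
`S (transpose f) (2j)` is even. For two symplectic partitions below `Λ`, the pointwise minimum
of the partial sums of their transposes is again concave, hence the sequence of partial sums of
a partition; transposing that partition back gives a symplectic common upper bound that is still
below `Λ`. The symplectic partitions below `Λ` thus form a finite directed set, whose element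
of largest total partial sum is its greatest element. -/

lemma S_zero (f : ℕ → ℕ) : S f 0 = 0 := by simp [S]

lemma S_succ (f : ℕ → ℕ) (k : ℕ) : S f (k + 1) = S f k + f (k + 1) := by
  unfold S
  rw [Finset.sum_Icc_succ_top (by omega)]

lemma S_mono (f : ℕ → ℕ) {k l : ℕ} (h : k ≤ l) : S f k ≤ S f l :=
  Finset.sum_le_sum_of_subset (Finset.Icc_subset_Icc_right h)

lemma S_congr {f g : ℕ → ℕ} (h : ∀ j, 1 ≤ j → f j = g j) (k : ℕ) : S f k = S g k :=
  Finset.sum_congr rfl (fun j hj => h j (Finset.mem_Icc.mp hj).1)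

lemma S_add_sum_Icc (f : ℕ → ℕ) {m N : ℕ} (h : m ≤ N) :
    S f m + ∑ i ∈ Finset.Icc (m + 1) N, f i = S f N := by
  have h2 := Finset.sum_Ioc_consecutive f (Nat.zero_le m) h
  rw [← Finset.Icc_add_one_left_eq_Ioc 0 N, ← Finset.Icc_add_one_left_eq_Ioc 0 m,
    ← Finset.Icc_add_one_left_eq_Ioc m N] at h2
  exact h2

lemma S_eq_of_forall_lt_eq_zero {f : ℕ → ℕ} {m k : ℕ} (h : ∀ j, m < j → f j = 0) (hmk : m ≤ k) :
    S f k = S f m := by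
  induction k, hmk using Nat.le_induction with
  | base => rfl
  | succ k hk ih => rw [S_succ, h (k + 1) (by omega), ih, add_zero]

namespace IsPartition

variable {f : ℕ → ℕ} {N : ℕ}

lemma S_le (hf : IsPartition f N) (k : ℕ) : S f k ≤ N := by
  obtain ⟨m, hm⟩ := hf.fin
  have h1 : S f (max k m) = N := hf.total _ (fun j hj => hm j (by omega))
  have h2 := S_mono f (le_max_left k m)
  omega

lemma eq_zero_of_lt (hf : IsPartition f N) {j : ℕ} (hj : N < j) : f j = 0 := by
  by_contra h
  have h1 : ∀ i ∈ Finset.Icc 1 j, 1 ≤ f i := by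
    intro i hi
    rw [Finset.mem_Icc] at hi
    have := hf.mono hi.1 hi.2
    omega
  have h2 : j ≤ S f j := by
    calc j = ∑ _i ∈ Finset.Icc 1 j, 1 := by simp
    _ ≤ S f j := Finset.sum_le_sum h1
  have := hf.S_le j
  omega

lemma S_eq_of_le (hf : IsPartition f N) {k : ℕ} (hk : N ≤ k) : S f k = N :=
  hf.total k (fun _ hj => hf.eq_zero_of_lt (by omega))

lemma min_le_S (hf : IsPartition f N) (k : ℕ) : min k N ≤ S f k := by
  induction k with
  | zero => simp
  | succ k ih =>
    rw [S_succ]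
    rcases Nat.eq_zero_or_pos (f (k + 1)) with h0 | hpos
    · have hk : S f k = N := hf.total k fun j hj => by
        have := hf.mono (j := k + 1) (k := j) (by omega) (by omega)
        omega
      omega
    · omega

lemma S_add_S_le_two_mul (hf : IsPartition f N) (k : ℕ) :
    S f (k + 2) + S f k ≤ 2 * S f (k + 1) := by
  have h := hf.mono (j := k + 1) (k := k + 1 + 1) (by omega) (by omega)
  show S f (k + 1 + 1) + _ ≤ _
  rw [S_succ f (k + 1), S_succ f k]
  omega

end IsPartition

lemma eq_Icc_one_ncard {A : Set ℕ} (hfin : A.Finite) (hpos : ∀ l ∈ A, 1 ≤ l)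
    (hdown : ∀ l ∈ A, ∀ l', 1 ≤ l' → l' ≤ l → l' ∈ A) : A = Set.Icc 1 A.ncard := by
  rcases A.eq_empty_or_nonempty with h | h
  · simp [h]
  have hbdd : BddAbove A := hfin.bddAbove
  have hA : A = Set.Icc 1 (sSup A) := by
    ext l
    exact ⟨fun hl => ⟨hpos l hl, le_csSup hbdd hl⟩,
      fun hl => hdown _ (Nat.sSup_mem h hbdd) _ hl.1 hl.2⟩
  have hcard : A.ncard = sSup A := by
    conv_lhs => rw [hA]
    rw [← Finset.coe_Icc, Set.ncard_coe_finset, Nat.card_Icc]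
    omega
  rwa [hcard]

namespace IsPartition

variable {f g : ℕ → ℕ} {N : ℕ}

lemma le_iff_le_transpose (hf : IsPartition f N) {i j : ℕ} (hi : 1 ≤ i) (hj : 1 ≤ j) :
    j ≤ f i ↔ i ≤ transpose f j := by
  have hfin : {l : ℕ | 1 ≤ l ∧ 1 ≤ j ∧ j ≤ f l}.Finite := by
    refine (Set.finite_Icc 1 N).subset ?_
    rintro l ⟨h1, _, h2⟩
    refine ⟨h1, ?_⟩
    by_contra hc
    have := hf.eq_zero_of_lt (j := l) (by omega)
    omega
  have heq := eq_Icc_one_ncard hfin (fun l hl => hl.1)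
    (fun l hl l' h1 h2 => ⟨h1, hj, hl.2.2.trans (hf.mono h1 h2)⟩)
  change j ≤ f i ↔ i ≤ Set.ncard {l : ℕ | 1 ≤ l ∧ 1 ≤ j ∧ j ≤ f l}
  constructor
  · intro h
    have hm : i ∈ {l : ℕ | 1 ≤ l ∧ 1 ≤ j ∧ j ≤ f l} := ⟨hi, hj, h⟩
    rw [heq, Set.mem_Icc] at hm
    exact hm.2
  · intro h
    have hm : i ∈ {l : ℕ | 1 ≤ l ∧ 1 ≤ j ∧ j ≤ f l} := by
      rw [heq, Set.mem_Icc]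
      exact ⟨hi, h⟩
    exact hm.2.2

lemma transpose_eq_card (hf : IsPartition f N) {j : ℕ} (hj : 1 ≤ j) :
    transpose f j = ((Finset.Icc 1 N).filter (fun i => j ≤ f i)).card := by
  have hset : {i : ℕ | 1 ≤ i ∧ 1 ≤ j ∧ j ≤ f i}
      = ↑((Finset.Icc 1 N).filter (fun i => j ≤ f i)) := by
    ext i
    simp only [Set.mem_ofPred_eq, Finset.coe_filter, Finset.mem_Icc]
    constructor
    · rintro ⟨h1, _, h2⟩
      refine ⟨⟨h1, ?_⟩, h2⟩
      by_contra hc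
      have := hf.eq_zero_of_lt (j := i) (by omega)
      omega
    · rintro ⟨⟨h1, _⟩, h2⟩
      exact ⟨h1, hj, h2⟩
  rw [transpose, hset, Set.ncard_coe_finset]

lemma transpose_transpose (hf : IsPartition f N) {i : ℕ} (hi : 1 ≤ i) :
    transpose (transpose f) i = f i := by
  have hset : {j : ℕ | 1 ≤ j ∧ 1 ≤ i ∧ i ≤ transpose f j} = Set.Icc 1 (f i) := by
    ext j
    simp only [Set.mem_ofPred_eq, Set.mem_Icc]
    constructor
    · rintro ⟨hj, _, hij⟩
      exact ⟨hj, (hf.le_iff_le_transpose hi hj).mpr hij⟩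
    · rintro ⟨hj, hjf⟩
      exact ⟨hj, hi, (hf.le_iff_le_transpose hi hj).mp hjf⟩
  rw [transpose, hset, ← Finset.coe_Icc, Set.ncard_coe_finset, Nat.card_Icc]
  omega

lemma S_transpose_transpose (hf : IsPartition f N) (k : ℕ) :
    S (transpose (transpose f)) k = S f k :=
  S_congr (fun _ hi => hf.transpose_transpose hi) k

lemma S_transpose_s14 (hf : IsPartition f N) (k : ℕ) :
    S (transpose f) k = ∑ i ∈ Finset.Icc 1 N, min (f i) k := by
  unfold S
  have h1 : ∀ j ∈ Finset.Icc 1 k, transpose f j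
      = ∑ i ∈ Finset.Icc 1 N, (if j ≤ f i then 1 else 0) := by
    intro j hj
    rw [hf.transpose_eq_card (Finset.mem_Icc.mp hj).1, Finset.card_filter]
  rw [Finset.sum_congr rfl h1, Finset.sum_comm]
  refine Finset.sum_congr rfl (fun i _ => ?_)
  have h2 : (Finset.Icc 1 k).filter (fun j => j ≤ f i) = Finset.Icc 1 (min (f i) k) := by
    ext j
    simp only [Finset.mem_filter, Finset.mem_Icc]
    omega
  rw [← Finset.card_filter, h2, Nat.card_Icc]
  omega

/-- Counting the cells of the diagram in columns `≤ k` or rows `≤ m`; equality holds for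
`m = transpose f k`, see `exists_S_transpose_add_S_eq`. -/
lemma S_transpose_add_S_le (hf : IsPartition f N) (k m : ℕ) :
    S (transpose f) k + S f m ≤ k * m + N := by
  rcases le_or_gt N m with h | h
  · have h1 : S f m = N := hf.S_eq_of_le h
    have h2 : S (transpose f) k ≤ k * N := by
      rw [hf.S_transpose_s14]
      calc ∑ i ∈ Finset.Icc 1 N, min (f i) k ≤ ∑ _i ∈ Finset.Icc 1 N, k :=
        Finset.sum_le_sum (fun i _ => min_le_right _ _)
      _ = k * N := by simp [Nat.card_Icc, mul_comm]
    have h3 : k * N ≤ k * m := Nat.mul_le_mul_left k h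
    omega
  · have hsplit := S_add_sum_Icc (fun i => min (f i) k) h.le
    simp only [S] at hsplit
    rw [hf.S_transpose_s14, ← hsplit]
    have h1 : ∑ i ∈ Finset.Icc 1 m, min (f i) k ≤ k * m := by
      calc ∑ i ∈ Finset.Icc 1 m, min (f i) k ≤ ∑ _i ∈ Finset.Icc 1 m, k :=
        Finset.sum_le_sum (fun i _ => min_le_right _ _)
      _ = k * m := by simp [Nat.card_Icc, mul_comm]
    have h2 : ∑ i ∈ Finset.Icc (m + 1) N, min (f i) k ≤ ∑ i ∈ Finset.Icc (m + 1) N, f i :=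
      Finset.sum_le_sum (fun i _ => min_le_left _ _)
    have h3 := S_add_sum_Icc f h.le
    rw [hf.S_eq_of_le le_rfl] at h3
    omega

lemma exists_S_transpose_add_S_eq (hf : IsPartition f N) {k : ℕ} (hk : 1 ≤ k) :
    ∃ m, S (transpose f) k + S f m = k * m + N := by
  set m := transpose f k
  refine ⟨m, ?_⟩
  have hmN : m ≤ N := by
    by_contra! h
    have h1 : k ≤ f m := (hf.le_iff_le_transpose (by omega) hk).mpr le_rfl
    have := hf.eq_zero_of_lt h
    omega
  have h1 : ∀ i ∈ Finset.Icc 1 m, min (f i) k = k := by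
    intro i hi
    rw [Finset.mem_Icc] at hi
    have : k ≤ f i := (hf.le_iff_le_transpose hi.1 hk).mpr hi.2
    omega
  have h2 : ∀ i ∈ Finset.Icc (m + 1) N, min (f i) k = f i := by
    intro i hi
    rw [Finset.mem_Icc] at hi
    have : ¬ k ≤ f i := fun hc => by
      have := (hf.le_iff_le_transpose (by omega) hk).mp hc
      omega
    omega
  have hsplit := S_add_sum_Icc (fun i => min (f i) k) hmN
  simp only [S] at hsplit
  rw [hf.S_transpose_s14, ← hsplit, Finset.sum_congr rfl h1, Finset.sum_congr rfl h2,
    Finset.sum_const, Nat.card_Icc, smul_eq_mul, Nat.add_sub_cancel]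
  have h3 := S_add_sum_Icc f hmN
  rw [hf.S_eq_of_le le_rfl] at h3
  linarith

lemma transpose_dom_transpose (hf : IsPartition f N) (hg : IsPartition g N) (h : Dom f g) :
    Dom (transpose g) (transpose f) := by
  intro k
  rcases Nat.eq_zero_or_pos k with rfl | hk
  · simp [S_zero]
  obtain ⟨m, hm⟩ := hf.exists_S_transpose_add_S_eq hk
  have := hg.S_transpose_add_S_le k m
  have := h m
  omega

protected lemma transpose (hf : IsPartition f N) : IsPartition (transpose f) N := by
  constructor
  · intro j k hj hjk
    rcases Nat.eq_zero_or_pos (transpose f k) with h | h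
    · omega
    · have h1 : k ≤ f (transpose f k) := (hf.le_iff_le_transpose h (by omega)).mpr le_rfl
      exact (hf.le_iff_le_transpose h hj).mp (hjk.trans h1)
  · refine ⟨f 1, fun j hj => ?_⟩
    by_contra hc
    have := (hf.le_iff_le_transpose le_rfl (by omega)).mpr (Nat.one_le_iff_ne_zero.mpr hc)
    omega
  · intro m hm
    have hf1m : f 1 ≤ m := by
      by_contra! hc
      have := (hf.le_iff_le_transpose le_rfl (by omega)).mp (show m + 1 ≤ f 1 by omega)
      have := hm (m + 1) (by omega)
      omega
    have h1 : ∀ i ∈ Finset.Icc 1 N, min (f i) m = f i := by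
      intro i hi
      have := hf.mono le_rfl (Finset.mem_Icc.mp hi).1
      omega
    rw [hf.S_transpose_s14, Finset.sum_congr rfl h1]
    exact hf.S_eq_of_le le_rfl

lemma transpose_dom_of_transpose_dom {T : ℕ → ℕ} (hf : IsPartition f N)
    (hT : IsPartition T N) (h : Dom (transpose f) T) : Dom (transpose T) f :=
  fun k => (transpose_dom_transpose hf.transpose hT h k).trans_eq (hf.S_transpose_transpose k)

lemma dom_transpose_of_dom_transpose {T : ℕ → ℕ} (hf : IsPartition f N)
    (hT : IsPartition T N) (h : Dom T (transpose f)) : Dom f (transpose T) :=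
  fun k => (hf.S_transpose_transpose k).symm.trans_le (transpose_dom_transpose hT hf.transpose h k)

lemma transpose_eq_transpose_succ_add_mult (hf : IsPartition f N) {i : ℕ} (hi : 1 ≤ i) :
    transpose f i = transpose f (i + 1) + mult f i := by
  have hA : {l : ℕ | 1 ≤ l ∧ 1 ≤ i ∧ i ≤ f l}
      = {l : ℕ | 1 ≤ l ∧ 1 ≤ i + 1 ∧ i + 1 ≤ f l} ∪ {l : ℕ | 1 ≤ l ∧ f l = i} := by
    ext l
    simp only [Set.mem_ofPred_eq, Set.mem_union]
    omega
  have hsub : ∀ c : ℕ, 1 ≤ c → {l : ℕ | 1 ≤ l ∧ c ≤ f l} ⊆ Set.Icc 1 N := by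
    rintro c hc l ⟨h1, h2⟩
    refine ⟨h1, ?_⟩
    by_contra hcon
    have := hf.eq_zero_of_lt (j := l) (by omega)
    omega
  have hfin1 : {l : ℕ | 1 ≤ l ∧ 1 ≤ i + 1 ∧ i + 1 ≤ f l}.Finite :=
    (Set.finite_Icc 1 N).subset fun l ⟨h1, _, h2⟩ => hsub (i + 1) (by omega) ⟨h1, h2⟩
  have hfin2 : {l : ℕ | 1 ≤ l ∧ f l = i}.Finite :=
    (Set.finite_Icc 1 N).subset fun l ⟨h1, h2⟩ => hsub i hi ⟨h1, h2.ge⟩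
  have hdisj : Disjoint {l : ℕ | 1 ≤ l ∧ 1 ≤ i + 1 ∧ i + 1 ≤ f l} {l : ℕ | 1 ≤ l ∧ f l = i} := by
    rw [Set.disjoint_left]
    rintro l ⟨_, _, h2⟩ ⟨_, h4⟩
    omega
  rw [transpose, transpose, mult, hA, Set.ncard_union_eq hdisj hfin1 hfin2]

lemma symp_iff (hf : IsPartition f N) : Symp f ↔ ∀ j, Even (S (transpose f) (2 * j)) := by
  have hstep : ∀ j, S (transpose f) (2 * (j + 1))
      = S (transpose f) (2 * j) + 2 * transpose f (2 * j + 2) + mult f (2 * j + 1) := by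
    intro j
    rw [show 2 * (j + 1) = 2 * j + 1 + 1 by ring, S_succ, S_succ,
      hf.transpose_eq_transpose_succ_add_mult (by omega)]
    ring
  constructor
  · intro hs j
    induction j with
    | zero => simp [S_zero]
    | succ j ih =>
      rw [hstep j]
      exact (ih.add (even_two_mul _)).add (hs _ (odd_two_mul_add_one j))
  · rintro he i ⟨j, rfl⟩
    have h := he (j + 1)
    rw [hstep j] at h
    exact (Nat.even_add.mp h).mp ((he j).add (even_two_mul _))

end IsPartition

def infPart (T₁ T₂ : ℕ → ℕ) : ℕ → ℕ := fun k =>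
  min (S T₁ k) (S T₂ k) - min (S T₁ (k - 1)) (S T₂ (k - 1))

lemma S_infPart (T₁ T₂ : ℕ → ℕ) (k : ℕ) : S (infPart T₁ T₂) k = min (S T₁ k) (S T₂ k) := by
  induction k with
  | zero => simp [S_zero]
  | succ k ih =>
    have h₁ := S_mono T₁ (Nat.le_add_right k 1)
    have h₂ := S_mono T₂ (Nat.le_add_right k 1)
    rw [S_succ, ih, infPart, Nat.add_sub_cancel]
    omega

lemma isPartition_infPart {T₁ T₂ : ℕ → ℕ} {N : ℕ} (hT₁ : IsPartition T₁ N)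
    (hT₂ : IsPartition T₂ N) : IsPartition (infPart T₁ T₂) N := by
  have hstep : ∀ k, infPart T₁ T₂ (k + 2) ≤ infPart T₁ T₂ (k + 1) := by
    intro k
    have c₁ := hT₁.S_add_S_le_two_mul k
    have c₂ := hT₂.S_add_S_le_two_mul k
    have m₁ := S_mono T₁ (Nat.le_add_right k 1)
    have m₂ := S_mono T₂ (Nat.le_add_right k 1)
    have m₃ := S_mono T₁ (Nat.le_add_right (k + 1) 1)
    have m₄ := S_mono T₂ (Nat.le_add_right (k + 1) 1)
    simp only [infPart, Nat.add_sub_cancel, show k + 2 - 1 = k + 1 by omega]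
    omega
  refine ⟨fun j k hj hjk => ?_, ⟨N, fun j hj => ?_⟩, fun m hm => ?_⟩
  · induction k, hjk using Nat.le_induction with
    | base => exact le_rfl
    | succ k hk ih =>
      obtain ⟨k, rfl⟩ : ∃ k', k = k' + 1 := ⟨k - 1, by omega⟩
      exact (hstep k).trans ih
  · simp only [infPart, hT₁.S_eq_of_le hj.le, hT₂.S_eq_of_le hj.le,
      hT₁.S_eq_of_le (Nat.le_sub_one_of_lt hj), hT₂.S_eq_of_le (Nat.le_sub_one_of_lt hj),
      Nat.sub_self]
  · rw [← S_eq_of_forall_lt_eq_zero hm (le_max_left m N), S_infPart,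
      hT₁.S_eq_of_le (le_max_right m N), hT₂.S_eq_of_le (le_max_right m N), min_self]

theorem exists_symp_upper_bound {N : ℕ} {Λ f₁ f₂ : ℕ → ℕ} (hΛ : IsPartition Λ N)
    (h₁ : IsPartition f₁ N) (hs₁ : Symp f₁) (hd₁ : Dom f₁ Λ)
    (h₂ : IsPartition f₂ N) (hs₂ : Symp f₂) (hd₂ : Dom f₂ Λ) :
    ∃ h, (IsPartition h N ∧ Symp h ∧ Dom h Λ) ∧ Dom f₁ h ∧ Dom f₂ h := by
  set T := infPart (transpose f₁) (transpose f₂)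
  have hT : IsPartition T N := isPartition_infPart h₁.transpose h₂.transpose
  have hST : ∀ k, S T k = min (S (transpose f₁) k) (S (transpose f₂) k) := S_infPart _ _
  refine ⟨transpose T, ⟨hT.transpose, ?_, ?_⟩, ?_, ?_⟩
  · rw [hT.transpose.symp_iff]
    intro j
    rw [hT.S_transpose_transpose, hST]
    rcases min_choice (S (transpose f₁) (2 * j)) (S (transpose f₂) (2 * j)) with h | h <;>
      rw [h]
    · exact h₁.symp_iff.mp hs₁ j
    · exact h₂.symp_iff.mp hs₂ j
  · refine hΛ.transpose_dom_of_transpose_dom hT fun k => ?_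
    rw [hST]
    exact le_min (h₁.transpose_dom_transpose hΛ hd₁ k) (h₂.transpose_dom_transpose hΛ hd₂ k)
  · exact h₁.dom_transpose_of_dom_transpose hT fun k => (hST k).trans_le (min_le_left _ _)
  · exact h₂.dom_transpose_of_dom_transpose hT fun k => (hST k).trans_le (min_le_right _ _)

def ones (N : ℕ) : ℕ → ℕ := fun j => if 1 ≤ j ∧ j ≤ N then 1 else 0

lemma S_ones (N k : ℕ) : S (ones N) k = min k N := by
  induction k with
  | zero => simp [S_zero]
  | succ k ih =>
    rw [S_succ, ih, ones]
    split_ifs <;> omega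

lemma isPartition_ones (N : ℕ) : IsPartition (ones N) N where
  mono j k hj hjk := by unfold ones; split_ifs <;> omega
  fin := ⟨N, fun j hj => by simp only [ones]; split_ifs <;> omega⟩
  total m hm := by
    have hN : N ≤ m := by
      by_contra! h
      have := hm (m + 1) (by omega)
      simp only [ones] at this
      split_ifs at this
      omega
    rw [S_ones]
    omega

lemma symp_ones (n : ℕ) : Symp (ones (2 * n)) := by
  intro i hi
  by_cases h1 : i = 1
  · subst h1
    have hset : {j : ℕ | 1 ≤ j ∧ ones (2 * n) j = 1} = Set.Icc 1 (2 * n) := by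
      ext j
      simp only [ones, Set.mem_ofPred_eq, Set.mem_Icc]
      split_ifs <;> grind
    rw [mult, hset, ← Finset.coe_Icc, Set.ncard_coe_finset, Nat.card_Icc, Nat.add_sub_cancel]
    exact even_two_mul n
  · have hset : {j : ℕ | 1 ≤ j ∧ ones (2 * n) j = i} = ∅ := by
      ext j
      simp only [ones, Set.mem_ofPred_eq, Set.mem_empty_iff_false, iff_false]
      have := hi.pos
      split_ifs <;> omega
    rw [mult, hset, Set.ncard_empty]
    exact Even.zero

lemma IsPartition.ones_dom {f : ℕ → ℕ} {N : ℕ} (hf : IsPartition f N) : Dom (ones N) f :=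
  fun k => (S_ones N k).trans_le (hf.min_le_S k)

def weight (N : ℕ) (f : ℕ → ℕ) : ℕ := ∑ k ∈ Finset.Icc 1 N, S f k

lemma IsPartition.weight_le {f : ℕ → ℕ} {N : ℕ} (hf : IsPartition f N) : weight N f ≤ N * N :=
  calc weight N f ≤ ∑ _k ∈ Finset.Icc 1 N, N := Finset.sum_le_sum fun k _ => hf.S_le k
  _ = N * N := by simp

lemma IsPartition.dom_of_weight_le {f g : ℕ → ℕ} {N : ℕ} (hf : IsPartition f N)
    (hg : IsPartition g N) (hfg : Dom f g) (hw : weight N g ≤ weight N f) : Dom g f := by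
  have hle : ∀ k ∈ Finset.Icc 1 N, S f k ≤ S g k := fun k _ => hfg k
  have heq := (Finset.sum_eq_sum_iff_of_le hle).mp (le_antisymm (Finset.sum_le_sum hle) hw)
  intro k
  rcases Nat.eq_zero_or_pos k with rfl | hk
  · simp [S_zero]
  rcases le_or_gt k N with hkN | hkN
  · exact (heq k (Finset.mem_Icc.mpr ⟨hk, hkN⟩)).ge
  · rw [hf.S_eq_of_le hkN.le, hg.S_eq_of_le hkN.le]

/-- A member of maximal `weight` is the greatest one. -/
theorem exists_greatest_of_directed {N : ℕ} {P : (ℕ → ℕ) → Prop}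
    (hP : ∀ f, P f → IsPartition f N) (hne : ∃ f, P f)
    (hdir : ∀ f₁ f₂, P f₁ → P f₂ → ∃ h, P h ∧ Dom f₁ h ∧ Dom f₂ h) :
    ∃ g, P g ∧ ∀ f, P f → Dom f g := by
  obtain ⟨f₀, hf₀⟩ := hne
  have hbdd : BddAbove (weight N '' {f | P f}) :=
    ⟨N * N, by rintro _ ⟨f, hf, rfl⟩; exact (hP f hf).weight_le⟩
  obtain ⟨g, hg, hgw⟩ := Nat.sSup_mem (Set.Nonempty.image (weight N) ⟨f₀, hf₀⟩) hbdd
  refine ⟨g, hg, fun f hf => ?_⟩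
  obtain ⟨h, hh, hfh, hgh⟩ := hdir f g hf hg
  have hw : weight N h ≤ weight N g := hgw ▸ le_csSup hbdd ⟨h, hh, rfl⟩
  exact fun k => (hfh k).trans ((hP g hg).dom_of_weight_le (hP h hh) hgh hw k)

theorem stmt14_general (n : ℕ) (Λ : ℕ → ℕ) (hΛ : IsPartition Λ (2*n)) :
    (∃ f, IsPartition f (2*n) ∧ Symp f ∧ Dom f Λ) ∧
    ∃ g, (IsPartition g (2*n) ∧ Symp g ∧ Dom g Λ) ∧
      ∀ f, IsPartition f (2*n) → Symp f → Dom f Λ → Dom f g := by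
  have hne : ∃ f, IsPartition f (2*n) ∧ Symp f ∧ Dom f Λ :=
    ⟨ones (2 * n), isPartition_ones _, symp_ones n, hΛ.ones_dom⟩
  obtain ⟨g, hg, hmax⟩ := exists_greatest_of_directed
    (P := fun f => IsPartition f (2*n) ∧ Symp f ∧ Dom f Λ) (fun _ hf => hf.1) hne
    fun _ _ ⟨h₁, hs₁, hd₁⟩ ⟨h₂, hs₂, hd₂⟩ => exists_symp_upper_bound hΛ h₁ hs₁ hd₁ h₂ hs₂ hd₂
  exact ⟨hne, g, hg, fun f hf hs hd => hmax f ⟨hf, hs, hd⟩⟩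

/-- The set of symplectic partitions of `2n` dominated by a given partition `Λ`
is nonempty and has a greatest element. -/
theorem stmt14 (n : ℕ) (hn : 1 ≤ n) (Λ : ℕ → ℕ) (hΛ : IsPartition Λ (2*n)) :
    (∃ f, IsPartition f (2*n) ∧ Symp f ∧ Dom f Λ) ∧
    ∃ g, (IsPartition g (2*n) ∧ Symp g ∧ Dom g Λ) ∧
      ∀ f, IsPartition f (2*n) → Symp f → Dom f Λ → Dom f g :=
  stmt14_general n Λ hΛ

end Wald
end
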